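/- arXiv:2403.19764 — 5 statements merged into one kernel-verified Lean document; each statement's English description precedes it below -/
import Mathlib

section
/- Let P be a unital left-cancellative semigroup, Z ⊆ P, and p, q ∈ P. Define pZ = {px : x ∈ Z} and p⁻¹Z = {y ∈ P : py ∈ Z}. Then q_n⁻¹p_n⋯q_1⁻¹p_1 p_1⁻¹q_1⋯p_n⁻¹q_n Z = (q_n⁻¹p_n⋯q_1⁻¹p_1 P) ∩ Z for all n and all p_i, q_i ∈ P; in particular for n = 1: q⁻¹p p⁻¹q Z = (q⁻¹pP) ∩ Z. -/
/-- Image of `Z` under left multiplication by `p`: `pZ = {p*z : z ∈ Z}`. -/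
def sgImg {M : Type*} [Monoid M] (p : M) (Z : Set M) : Set M := (p * ·) '' Z

/-- Preimage of `Z` under left multiplication by `p`: `p⁻¹Z = {y : p*y ∈ Z}`. -/
def sgPre {M : Type*} [Monoid M] (p : M) (Z : Set M) : Set M := (p * ·) ⁻¹' Z

/-- `q⁻¹ p Z` for a pair `(p, q)`. -/
def sgStep {M : Type*} [Monoid M] (pq : M × M) (Z : Set M) : Set M :=
  sgPre pq.2 (sgImg pq.1 Z)

/-- `qₙ⁻¹ pₙ ⋯ q₁⁻¹ p₁ Z` for `L = [(p₁,q₁), …, (pₙ,qₙ)]`. -/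
def sgWordT {M : Type*} [Monoid M] (L : List (M × M)) (Z : Set M) : Set M :=
  L.foldl (fun Z pq => sgStep pq Z) Z

/-- `p₁⁻¹ q₁ ⋯ pₙ⁻¹ qₙ Z` for `L = [(p₁,q₁), …, (pₙ,qₙ)]`. -/
def sgWordS {M : Type*} [Monoid M] (L : List (M × M)) (Z : Set M) : Set M :=
  L.foldr (fun pq Z => sgPre pq.1 (sgImg pq.2 Z)) Z

lemma sgStep_key {M : Type*} [Monoid M] [IsLeftCancelMul M] (p q : M) (W S : Set M) :
    sgStep (p, q) (W ∩ sgPre p (sgImg q S)) = sgStep (p, q) W ∩ S := by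
  ext y
  simp only [sgStep, sgPre, sgImg, Set.mem_preimage, Set.mem_image, Set.mem_inter_iff]
  constructor
  · rintro ⟨x, ⟨hxW, z, hzS, hz⟩, hxy⟩
    refine ⟨⟨x, hxW, hxy⟩, ?_⟩
    have : q * z = q * y := by rw [hz, hxy]
    rwa [mul_left_cancel this] at hzS
  · rintro ⟨⟨x, hxW, hxy⟩, hyS⟩
    exact ⟨x, ⟨hxW, y, hyS, hxy.symm ▸ rfl⟩, hxy⟩

lemma sgWord_key {M : Type*} [Monoid M] [IsLeftCancelMul M] (L : List (M × M)) :
    ∀ (W Z : Set M), sgWordT L (W ∩ sgWordS L Z) = sgWordT L W ∩ Z := by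
  induction L with
  | nil => intro W Z; rfl
  | cons pq L ih =>
    intro W Z
    have h1 : sgWordT (pq :: L) (W ∩ sgWordS (pq :: L) Z)
        = sgWordT L (sgStep pq (W ∩ sgPre pq.1 (sgImg pq.2 (sgWordS L Z)))) := rfl
    rw [h1, show pq = (pq.1, pq.2) from rfl, sgStep_key, ih]
    rfl

/-- In a unital left-cancellative semigroup,
`qₙ⁻¹pₙ⋯q₁⁻¹p₁ p₁⁻¹q₁⋯pₙ⁻¹qₙ Z = (qₙ⁻¹pₙ⋯q₁⁻¹p₁ P) ∩ Z`; in particular, for `n = 1`,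
`q⁻¹p p⁻¹q Z = (q⁻¹pP) ∩ Z`. -/
theorem stmt0 {M : Type*} [Monoid M] [IsLeftCancelMul M] :
    (∀ (L : List (M × M)) (Z : Set M),
      sgWordT L (sgWordS L Z) = sgWordT L Set.univ ∩ Z) ∧
    (∀ (p q : M) (Z : Set M),
      sgStep (p, q) (sgPre p (sgImg q Z)) = sgStep (p, q) Set.univ ∩ Z) := by
  constructor
  · intro L Z
    have := sgWord_key L Set.univ Z
    rwa [Set.univ_inter] at this
  · intro p q Z
    have := sgStep_key p q Set.univ Z
    rwa [Set.univ_inter] at this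
end

section
/- Let P be a unital subsemigroup of a group G. For any p_1, q_1, ..., p_n, q_n ∈ P, the constructible ideal q_n⁻¹p_n ⋯ q_1⁻¹p_1 P equals P ∩ (q_n⁻¹·p_n·P) ∩ (q_n⁻¹·p_n·q_{n-1}⁻¹·p_{n-1}·P) ∩ ⋯ ∩ (q_n⁻¹·p_n ⋯ q_1⁻¹·p_1·P), where the sets on the right are computed in the group G. -/
/-- `q⁻¹(pZ)` computed inside the unital subsemigroup `P` of the group `G`. -/
def subStep {G : Type*} [Group G] (P : Submonoid G) (pq : G × G) (Z : Set G) : Set G :=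
  {y | y ∈ P ∧ pq.2 * y ∈ (pq.1 * ·) '' Z}

/-- `qₙ⁻¹pₙ ⋯ q₁⁻¹p₁ Z` for `L = [(p₁,q₁), …, (pₙ,qₙ)]`, computed inside `P`. -/
def subWord {G : Type*} [Group G] (P : Submonoid G) (L : List (G × G)) (Z : Set G) : Set G :=
  L.foldl (fun Z pq => subStep P pq Z) Z

/-- The group element `qₙ⁻¹pₙ ⋯ q₁⁻¹p₁ ∈ G` associated to `L = [(p₁,q₁), …, (pₙ,qₙ)]`. -/
def wordElt {G : Type*} [Group G] (L : List (G × G)) : G :=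
  L.foldl (fun acc pq => pq.2⁻¹ * pq.1 * acc) 1


lemma subStep_eq {G : Type*} [Group G] (P : Submonoid G) (pq : G × G) (S : Set G) :
    subStep P pq S = (P : Set G) ∩ (fun x => pq.2⁻¹ * pq.1 * x) '' S := by
  ext y
  simp only [subStep, Set.mem_setOf_eq, Set.mem_inter_iff, SetLike.mem_coe, Set.mem_image]
  constructor
  · rintro ⟨hy, z, hz, hzy⟩
    exact ⟨hy, z, hz, by rw [mul_assoc, hzy, inv_mul_cancel_left]⟩
  · rintro ⟨hy, z, hz, hzy⟩
    exact ⟨hy, z, hz, by rw [← hzy]; group⟩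

lemma wordElt_concat {G : Type*} [Group G] (L : List (G × G)) (pq : G × G) :
    wordElt (L ++ [pq]) = pq.2⁻¹ * pq.1 * wordElt L := by
  simp [wordElt, List.foldl_append]

/-- `qₙ⁻¹pₙ ⋯ q₁⁻¹p₁ P = P ∩ (qₙ⁻¹·pₙ·P) ∩ (qₙ⁻¹·pₙ·qₙ₋₁⁻¹·pₙ₋₁·P) ∩ ⋯ ∩
(qₙ⁻¹·pₙ ⋯ q₁⁻¹·p₁·P)`, the sets on the right being computed in the group `G`. -/
theorem stmt2 {G : Type*} [Group G] (P : Submonoid G) (L : List (G × G))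
    (hL : ∀ pq ∈ L, pq.1 ∈ P ∧ pq.2 ∈ P) :
    subWord P L (P : Set G)
      = (P : Set G) ∩ ⋂ k ∈ Finset.range L.length,
          (fun x => wordElt (L.drop k) * x) '' (P : Set G) := by
  induction L using List.reverseRecOn with
  | nil => simp [subWord]
  | append_singleton L pq ih =>
    have hL' : ∀ x ∈ L, x.1 ∈ P ∧ x.2 ∈ P := fun x hx => hL x (by simp [hx])
    have h1 : subWord P (L ++ [pq]) (P : Set G) = subStep P pq (subWord P L (P : Set G)) := by
      simp [subWord]
    set g := pq.2⁻¹ * pq.1 with hg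
    have hb : Function.Bijective (fun x : G => g * x) := (Equiv.mulLeft g).bijective
    rw [h1, ih hL', subStep_eq, Set.image_inter hb.injective]
    rw [Set.image_iInter₂ hb]
    have hdrop : ∀ k ∈ Finset.range L.length,
        (fun x : G => g * x) '' ((fun x => wordElt (L.drop k) * x) '' (P : Set G))
          = (fun x => wordElt ((L ++ [pq]).drop k) * x) '' (P : Set G) := by
      intro k hk
      rw [Finset.mem_range] at hk
      rw [List.drop_append_of_le_length hk.le, wordElt_concat, Set.image_image]
      simp [mul_assoc, hg]
    have hlast : (fun x : G => g * x) '' (P : Set G)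
        = (fun x => wordElt ((L ++ [pq]).drop L.length) * x) '' (P : Set G) := by
      rw [List.drop_append_of_le_length le_rfl, List.drop_length]
      simp [wordElt, hg]
    rw [List.length_append, List.length_singleton, Finset.range_add_one]
    rw [Finset.set_biInter_insert]
    ext y
    simp only [Set.mem_inter_iff, Set.mem_iInter]
    constructor
    · rintro ⟨hy, hgP, hrest⟩
      exact ⟨hy, hlast ▸ hgP, fun k hk => hdrop k hk ▸ hrest k hk⟩
    · rintro ⟨hy, hgP, hrest⟩
      exact ⟨hy, hlast ▸ hgP, fun k hk => (hdrop k hk) ▸ hrest k hk⟩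
end

section
/- Let P be a unital subsemigroup of a group G. The family of constructible right ideals J := {q_n⁻¹p_n ⋯ q_1⁻¹p_1 P : n ∈ ℕ, p_i, q_i ∈ P} ∪ {∅} is closed under finite intersections: if x, y ∈ J then x ∩ y ∈ J. -/
/-- The family of constructible right ideals
`J = {qₙ⁻¹pₙ ⋯ q₁⁻¹p₁ P : n ∈ ℕ, pᵢ, qᵢ ∈ P} ∪ {∅}`. -/
def Constructible {G : Type*} [Group G] (P : Submonoid G) : Set (Set G) :=
  {S | ∃ L : List (G × G), (∀ pq ∈ L, pq.1 ∈ P ∧ pq.2 ∈ P) ∧ S = subWord P L (P : Set G)}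
    ∪ {∅}

section Aux

variable {G : Type*} [Group G] (P : Submonoid G)

lemma subWord_concat (L : List (G × G)) (pq : G × G) (Z : Set G) :
    subWord P (L ++ [pq]) Z = subStep P pq (subWord P L Z) := by
  simp [subWord, List.foldl_append]

lemma subStep_subset (pq : G × G) (Z : Set G) : subStep P pq Z ⊆ (P : Set G) :=
  fun _ h => h.1

lemma subWord_subset (L : List (G × G)) : subWord P L (P : Set G) ⊆ (P : Set G) := by
  induction L using List.reverseRecOn with
  | nil => exact le_refl _
  | append_singleton L pq _ => rw [subWord_concat]; exact subStep_subset P pq _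

lemma constructible_subset {X : Set G} (hX : X ∈ Constructible P) : X ⊆ (P : Set G) := by
  rcases hX with ⟨L, -, rfl⟩ | hX
  · exact subWord_subset P L
  · rw [Set.mem_singleton_iff] at hX
    simp [hX]

lemma subStep_mem {X : Set G} (hX : X ∈ Constructible P) {a b : G}
    (ha : a ∈ P) (hb : b ∈ P) : subStep P (a, b) X ∈ Constructible P := by
  rcases hX with ⟨L, hL, rfl⟩ | hX
  · left
    refine ⟨L ++ [(a, b)], ?_, (subWord_concat P L (a, b) _).symm⟩
    intro pq hpq
    rcases List.mem_append.mp hpq with h | h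
    · exact hL pq h
    · simp only [List.mem_singleton] at h
      subst h; exact ⟨ha, hb⟩
  · right
    rw [Set.mem_singleton_iff] at hX
    subst hX
    simp [subStep]

/-- Key identity: intersecting with a one-step set can be rewritten as three steps
applied to a shorter intersection. -/
lemma key_identity {X Y : Set G} (hY : Y ⊆ (P : Set G)) {p q : G} (hp : p ∈ P) :
    X ∩ subStep P (p, q) Y =
      subStep P (1, q) (subStep P (p, 1) (subStep P (q, p) X ∩ Y)) := by
  ext z
  simp only [subStep, Set.mem_inter_iff, Set.mem_setOf_eq, Set.mem_image, one_mul]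
  constructor
  · rintro ⟨hzX, hzP, v, hvY, hpv⟩
    exact ⟨hzP, p * v, ⟨P.mul_mem hp (hY hvY), v, ⟨⟨hY hvY, z, hzX, hpv.symm⟩, hvY⟩, rfl⟩, hpv⟩
  · rintro ⟨hzP, w, ⟨-, u, ⟨⟨-, x, hxX, hqx⟩, huY⟩, hpu⟩, hwz⟩
    have hz : q * z = p * u := by rw [← hwz, ← hpu]
    have hzx : z = x := mul_left_cancel (by rw [hz, hqx])
    exact ⟨hzx ▸ hxX, hzP, u, huY, hz.symm⟩

lemma inter_word (M : List (G × G)) :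
    (∀ pq ∈ M, pq.1 ∈ P ∧ pq.2 ∈ P) →
      ∀ X ∈ Constructible P, X ∩ subWord P M (P : Set G) ∈ Constructible P := by
  induction M using List.reverseRecOn with
  | nil =>
    intro _ X hX
    rwa [subWord, List.foldl_nil, Set.inter_eq_left.mpr (constructible_subset P hX)]
  | append_singleton M pq ih =>
    intro hM X hX
    obtain ⟨p, q⟩ := pq
    have hp : p ∈ P := (hM (p, q) (by simp)).1
    have hq : q ∈ P := (hM (p, q) (by simp)).2
    have hM' : ∀ pq ∈ M, pq.1 ∈ P ∧ pq.2 ∈ P := fun pq h => hM pq (by simp [h])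
    rw [subWord_concat, key_identity P (subWord_subset P M) hp]
    exact subStep_mem P
      (subStep_mem P (ih hM' _ (subStep_mem P hX hq hp)) hp P.one_mem) P.one_mem hq

end Aux

/-- The constructible ideals of a unital subsemigroup of a group are closed under
finite intersections. -/
theorem stmt3 {G : Type*} [Group G] (P : Submonoid G)
    (x y : Set G) (hx : x ∈ Constructible P) (hy : y ∈ Constructible P) :
    x ∩ y ∈ Constructible P := by
  rcases hy with ⟨M, hM, rfl⟩ | hy
  · exact inter_word P M hM x hx
  · right
    rw [Set.mem_singleton_iff] at hy
    rw [hy, Set.inter_empty]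
    rfl
end

section
/- Let P be a unital subsemigroup of a group G, and suppose p_1, q_1, ..., p_n, q_n ∈ P satisfy p_1⁻¹q_1 ⋯ p_n⁻¹q_n = e in G. Then the constructible ideals satisfy q_n⁻¹p_n ⋯ q_1⁻¹p_1 P = p_1⁻¹q_1 ⋯ p_n⁻¹q_n P, where both sides are computed by iterated image/preimage operations under left multiplication inside P. -/
/-- `p⁻¹(qZ)` computed inside the unital subsemigroup `P` of the group `G`. -/
def subStepRev {G : Type*} [Group G] (P : Submonoid G) (pq : G × G) (Z : Set G) : Set G :=
  {y | y ∈ P ∧ pq.1 * y ∈ (pq.2 * ·) '' Z}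

/-- `p₁⁻¹q₁ ⋯ pₙ⁻¹qₙ Z` for `L = [(p₁,q₁), …, (pₙ,qₙ)]`, computed inside `P`. -/
def subWordRev {G : Type*} [Group G] (P : Submonoid G) (L : List (G × G)) (Z : Set G) : Set G :=
  L.foldr (fun pq Z => subStepRev P pq Z) Z

lemma mem_subStep {G : Type*} [Group G] (P : Submonoid G) (pq : G × G) (Z : Set G) (y : G) :
    y ∈ subStep P pq Z ↔ y ∈ P ∧ pq.1⁻¹ * pq.2 * y ∈ Z := by
  simp only [subStep, Set.mem_setOf_eq, Set.mem_image]
  constructor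
  · rintro ⟨hy, z, hz, hz'⟩
    refine ⟨hy, ?_⟩
    have : pq.1⁻¹ * pq.2 * y = z := by rw [mul_assoc, ← hz', inv_mul_cancel_left]
    rwa [this]
  · rintro ⟨hy, hz⟩
    exact ⟨hy, _, hz, by group⟩

lemma mem_subStepRev {G : Type*} [Group G] (P : Submonoid G) (pq : G × G) (Z : Set G) (y : G) :
    y ∈ subStepRev P pq Z ↔ y ∈ P ∧ (pq.1⁻¹ * pq.2)⁻¹ * y ∈ Z := by
  simp only [subStepRev, Set.mem_setOf_eq, Set.mem_image]
  constructor
  · rintro ⟨hy, z, hz, hz'⟩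
    refine ⟨hy, ?_⟩
    have : (pq.1⁻¹ * pq.2)⁻¹ * y = z := by
      rw [mul_inv_rev, inv_inv, mul_assoc, ← hz', inv_mul_cancel_left]
    rwa [this]
  · rintro ⟨hy, hz⟩
    refine ⟨hy, _, hz, ?_⟩
    group

lemma mem_subWord {G : Type*} [Group G] (P : Submonoid G) (L : List (G × G)) (Z : Set G) (y : G) :
    y ∈ subWord P L Z ↔
      (∀ k < L.length, ((L.drop (k+1)).map fun pq => pq.1⁻¹ * pq.2).prod * y ∈ P) ∧
      ((L.map fun pq => pq.1⁻¹ * pq.2).prod) * y ∈ Z := by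
  induction L using List.reverseRecOn generalizing y with
  | nil => simp [subWord]
  | append_singleton L x ih =>
    have h1 : subWord P (L ++ [x]) Z = subStep P x (subWord P L Z) := by
      simp [subWord, List.foldl_append]
    rw [h1, mem_subStep, ih]
    constructor
    · rintro ⟨hy, h, hz⟩
      refine ⟨?_, ?_⟩
      · intro k hk
        simp only [List.length_append, List.length_singleton] at hk
        rcases Nat.lt_or_ge k L.length with hk' | hk'
        · have : (L ++ [x]).drop (k+1) = L.drop (k+1) ++ [x] := by
            rw [List.drop_append_of_le_length (by omega)]
          rw [this]
          simpa [mul_assoc] using h k hk'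
        · have hk'' : k = L.length := by omega
          subst hk''
          simp [hy]
      · simpa [mul_assoc] using hz
    · rintro ⟨h, hz⟩
      refine ⟨?_, ?_, ?_⟩
      · have := h L.length (by simp)
        simpa using this
      · intro k hk
        have := h k (by simp; omega)
        have hd : (L ++ [x]).drop (k+1) = L.drop (k+1) ++ [x] := by
          rw [List.drop_append_of_le_length (by omega)]
        rw [hd] at this
        simpa [mul_assoc] using this
      · simpa [mul_assoc] using hz

lemma mem_subWordRev {G : Type*} [Group G] (P : Submonoid G) (L : List (G × G)) (Z : Set G)
    (y : G) :
    y ∈ subWordRev P L Z ↔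
      (∀ k < L.length, (((L.take k).map fun pq => pq.1⁻¹ * pq.2).prod)⁻¹ * y ∈ P) ∧
      (((L.map fun pq => pq.1⁻¹ * pq.2).prod))⁻¹ * y ∈ Z := by
  induction L generalizing y with
  | nil => simp [subWordRev]
  | cons x L ih =>
    have h1 : subWordRev P (x :: L) Z = subStepRev P x (subWordRev P L Z) := rfl
    rw [h1, mem_subStepRev, ih]
    constructor
    · rintro ⟨hy, h, hz⟩
      refine ⟨?_, ?_⟩
      · intro k hk
        match k with
        | 0 => simpa using hy
        | k+1 =>
          simp only [List.length_cons] at hk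
          have := h k (by omega)
          simpa [mul_inv_rev, mul_assoc] using this
      · simpa [mul_inv_rev, mul_assoc] using hz
    · rintro ⟨h, hz⟩
      refine ⟨?_, ?_, ?_⟩
      · simpa using h 0 (by simp)
      · intro k hk
        have := h (k+1) (by simp; omega)
        simpa [mul_inv_rev, mul_assoc] using this
      · simpa [mul_inv_rev, mul_assoc] using hz

/-- If `p₁⁻¹q₁ ⋯ pₙ⁻¹qₙ = e` in `G`, then
`qₙ⁻¹pₙ ⋯ q₁⁻¹p₁ P = p₁⁻¹q₁ ⋯ pₙ⁻¹qₙ P`, both sides computed by iterated image/preimage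
operations under left multiplication inside `P`. -/
theorem stmt4 {G : Type*} [Group G] (P : Submonoid G) (L : List (G × G))
    (hL : ∀ pq ∈ L, pq.1 ∈ P ∧ pq.2 ∈ P)
    (hneutral : (L.map fun pq => pq.1⁻¹ * pq.2).prod = 1) :
    subWord P L (P : Set G) = subWordRev P L (P : Set G) := by
  ext y
  rw [mem_subWord, mem_subWordRev]
  have key : ∀ k, (((L.take k).map fun pq => pq.1⁻¹ * pq.2).prod)⁻¹
      = ((L.drop k).map fun pq => pq.1⁻¹ * pq.2).prod := by
    intro k
    have : ((L.take k).map fun pq => pq.1⁻¹ * pq.2).prod *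
        ((L.drop k).map fun pq => pq.1⁻¹ * pq.2).prod = 1 := by
      rw [← List.prod_append, ← List.map_append, List.take_append_drop, hneutral]
    exact inv_eq_of_mul_eq_one_right this
  simp only [hneutral, inv_one, one_mul]
  constructor
  · rintro ⟨h, hy⟩
    refine ⟨?_, hy⟩
    intro k hk
    rw [key]
    match k with
    | 0 => simpa [hneutral] using hy
    | k+1 => exact h k (by omega)
  · rintro ⟨h, hy⟩
    refine ⟨?_, hy⟩
    intro k hk
    rcases Nat.lt_or_ge (k+1) L.length with hk' | hk'
    · have := h (k+1) hk'
      rwa [key] at this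
    · have : L.drop (k+1) = [] := by
        rw [List.drop_eq_nil_iff]; omega
      simpa [this] using hy
end

section
/- Let X = {X_p}_{p∈P} be a concrete product system over a unital subsemigroup P of a group G, realized in B(H), and let t be a Toeplitz representation of X. If r ∈ q_n^{-ε'} p_n ⋯ q_1⁻¹ p_1^{ε} P (constructible-ideal membership) for p_i, q_i, r ∈ P and ε, ε' ∈ {0,1}, then p_1^{-ε} q_1 ⋯ p_n⁻¹ q_n^{ε'} r ∈ P and (t_{p_1}(ξ_{p_1})*)^ε t_{q_1}(ξ_{q_1}) ⋯ t_{p_n}(ξ_{p_n})* t_{q_n}(ξ_{q_n})^{ε'} t_r(ξ_r) = t_{p_1^{-ε} q_1 ⋯ p_n⁻¹ q_n^{ε'} r}((ξ_{p_1}*)^ε ξ_{q_1} ⋯ ξ_{p_n}* ξ_{q_n}^{ε'} ξ_r) for all ξ_{p_i} ∈ X_{p_i}, ξ_{q_i} ∈ X_{q_i}, ξ_r ∈ X_r. -/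
/-- The constructible set `qₙ^{-ε'} pₙ qₙ₋₁⁻¹ pₙ₋₁ ⋯ q₁⁻¹ p₁^{ε} Z` for
`L = [(p₁,q₁), …, (pₙ,qₙ)]` and flags `ε, ε' ∈ {0,1}`. -/
def psWord {M : Type*} [Monoid M] (ε ε' : Bool) (L : List (M × M)) (Z : Set M) : Set M :=
  match L with
  | [] => Z
  | (p, q) :: rest =>
    let Z0 : Set M := if ε then (p * ·) '' Z else Z
    let Z1 : Set M := (((p, q) :: rest).zip rest).foldl
      (fun W x => (x.2.1 * ·) '' ((x.1.2 * ·) ⁻¹' W)) Z0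
    if ε' then ((((p, q) :: rest).getLast (List.cons_ne_nil _ _)).2 * ·) ⁻¹' Z1 else Z1

/-- The product `F₁(e₁)^{ε} F₂(e₁) F₁(e₂) F₂(e₂) ⋯ F₁(eₙ) F₂(eₙ)^{ε'}` in a monoid, where
the first `F₁`-factor is present only if `ε = 1` and the last `F₂`-factor only if `ε' = 1`. -/
def genProd {α R : Type*} [Monoid R] (ε ε' : Bool) (F₁ F₂ : α → R) (E : List α) : R :=
  (((List.range E.length).zip E).map (fun ie =>
    (if ie.1 = 0 ∧ ε = false then 1 else F₁ ie.2) *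
    (if ie.1 = E.length - 1 ∧ ε' = false then 1 else F₂ ie.2))).prod

lemma zip_tail_foldl {α β : Type*} (f : β → α × α → β) :
    ∀ (L : List α) (a b : α) (z : β),
    ((a :: (L ++ [b])).zip (L ++ [b])).foldl f z
      = f (((a :: L).zip L).foldl f z) ((a :: L).getLast (List.cons_ne_nil _ _), b)
  | [], a, b, z => by simp
  | c :: L, a, b, z => by
    show List.foldl f z ((a :: c :: (L ++ [b])).zip (c :: (L ++ [b]))) = _
    rw [List.zip_cons_cons, List.foldl_cons, zip_tail_foldl f L c b (f z (a, c))]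
    simp [List.getLast_cons]

lemma psWord_append {M : Type*} [Monoid M] (ε ε' : Bool) (L : List (M × M)) (hL : L ≠ [])
    (b : M × M) (Z : Set M) :
    psWord ε ε' (L ++ [b]) Z
      = if ε' then (b.2 * ·) ⁻¹' ((b.1 * ·) '' (psWord ε true L Z))
        else (b.1 * ·) '' (psWord ε true L Z) := by
  obtain ⟨⟨p, q⟩, L', rfl⟩ := List.exists_cons_of_ne_nil hL
  show psWord ε ε' ((p, q) :: (L' ++ [b])) Z = _
  obtain ⟨b1, b2⟩ := b
  simp only [psWord, List.getLast_append, List.getLast_cons_cons]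
  rw [zip_tail_foldl]
  cases ε' <;> simp

lemma psWord_singleton {M : Type*} [Monoid M] (ε ε' : Bool) (b : M × M) (Z : Set M) :
    psWord ε ε' [b] Z
      = if ε' then (b.2 * ·) ⁻¹' (if ε then (b.1 * ·) '' Z else Z)
        else (if ε then (b.1 * ·) '' Z else Z) := by
  obtain ⟨p, q⟩ := b
  simp [psWord]

lemma genProd_nil {α R : Type*} [Monoid R] (ε ε' : Bool) (F₁ F₂ : α → R) :
    genProd ε ε' F₁ F₂ [] = 1 := rfl

lemma genProd_append {α R : Type*} [Monoid R] (ε ε' : Bool) (F₁ F₂ : α → R)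
    (E : List α) (a : α) :
    genProd ε ε' F₁ F₂ (E ++ [a])
      = genProd ε true F₁ F₂ E *
        ((if E.length = 0 ∧ ε = false then 1 else F₁ a) *
          (if ε' = false then 1 else F₂ a)) := by
  unfold genProd
  have hz : (List.range (E ++ [a]).length).zip (E ++ [a])
      = (List.range E.length).zip E ++ [(E.length, a)] := by
    rw [List.length_append, List.length_singleton, List.range_succ,
      List.zip_append (by simp)]
    simp
  rw [hz, List.map_append, List.prod_append]
  congr 1
  · apply congrArg
    apply List.map_congr_left
    intro ie hie
    have hlt : ie.1 < E.length := List.mem_range.mp (List.of_mem_zip hie).1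
    have h1 : ¬ (ie.1 = (E ++ [a]).length - 1 ∧ ε' = false) := by
      simp only [List.length_append, List.length_singleton]
      omega
    have h2 : ¬ (ie.1 = E.length - 1 ∧ true = false) := by simp
    rw [if_neg h1, if_neg h2]
  · simp

/-- For a Toeplitz representation `t` of a concrete product system `X` in `B(H)`, if
`r ∈ qₙ^{-ε'} pₙ ⋯ q₁⁻¹ p₁^{ε} P`, then `p₁^{-ε} q₁ ⋯ pₙ⁻¹ qₙ^{ε'} r ∈ P` and
`(t_{p₁}(ξ_{p₁})*)^{ε} t_{q₁}(ξ_{q₁}) ⋯ t_{pₙ}(ξ_{pₙ})* t_{qₙ}(ξ_{qₙ})^{ε'} t_r(ξ_r)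
  = t_{p₁^{-ε} q₁ ⋯ pₙ⁻¹ qₙ^{ε'} r}((ξ_{p₁}*)^{ε} ξ_{q₁} ⋯ ξ_{pₙ}* ξ_{qₙ}^{ε'} ξ_r)`. -/
theorem stmt13 {G : Type*} [Group G] (P : Submonoid G)
    {H K : Type*} [NormedAddCommGroup H] [InnerProductSpace ℂ H] [CompleteSpace H]
    [NormedAddCommGroup K] [InnerProductSpace ℂ K] [CompleteSpace K]
    (X : ↥P → Set (H →L[ℂ] H))
    (hXclosed : ∀ p, IsClosed (X p))
    (hXestar : ∀ ξ ∈ X 1, star ξ ∈ X 1)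
    (hXmul : ∀ (p q : ↥P) (ξ η : H →L[ℂ] H), ξ ∈ X p → η ∈ X q → ξ * η ∈ X (p * q))
    (hXstar : ∀ (p q : ↥P) (ξ ζ : H →L[ℂ] H), ξ ∈ X p → ζ ∈ X (p * q) →
      star ξ * ζ ∈ X q)
    (t : ↥P → (H →L[ℂ] H) → (K →L[ℂ] K))
    (htadd : ∀ (p : ↥P) (ξ η : H →L[ℂ] H), ξ ∈ X p → η ∈ X p →
      t p (ξ + η) = t p ξ + t p η)
    (htestar : ∀ ξ ∈ X 1, t 1 (star ξ) = star (t 1 ξ))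
    (htmul : ∀ (p q : ↥P) (ξ η : H →L[ℂ] H), ξ ∈ X p → η ∈ X q →
      t p ξ * t q η = t (p * q) (ξ * η))
    (htstar : ∀ (p q : ↥P) (ξ ζ : H →L[ℂ] H), ξ ∈ X p → ζ ∈ X (p * q) →
      star (t p ξ) * t (p * q) ζ = t q (star ξ * ζ))
    (ε ε' : Bool)
    (E : List (↥P × (H →L[ℂ] H) × ↥P × (H →L[ℂ] H)))
    (hE : ∀ e ∈ E, e.2.1 ∈ X e.1 ∧ e.2.2.2 ∈ X e.2.2.1)
    (r : ↥P) (ξr : H →L[ℂ] H) (hξr : ξr ∈ X r)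
    (hr : r ∈ psWord ε ε' (E.map fun e => (e.1, e.2.2.1)) Set.univ) :
    ∃ h : genProd ε ε' (fun e => ((e.1 : G))⁻¹) (fun e => ((e.2.2.1 : ↥P) : G)) E
        * (r : G) ∈ P,
      genProd ε ε' (fun e => star (t e.1 e.2.1)) (fun e => t e.2.2.1 e.2.2.2) E * t r ξr
        = t ⟨genProd ε ε' (fun e => ((e.1 : G))⁻¹) (fun e => ((e.2.2.1 : ↥P) : G)) E
              * (r : G), h⟩
            (genProd ε ε' (fun e => star e.2.1) (fun e => e.2.2.2) E * ξr) := by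
  induction E using List.reverseRecOn generalizing ε' r ξr with
  | nil =>
    have h1 : genProd ε ε' (fun e => ((e.1 : G))⁻¹) (fun e => ((e.2.2.1 : ↥P) : G))
        ([] : List (↥P × (H →L[ℂ] H) × ↥P × (H →L[ℂ] H))) * (r : G) ∈ P := by
      rw [genProd_nil, one_mul]; exact r.2
    refine ⟨h1, ?_⟩
    have h2 : (⟨genProd ε ε' (fun e => ((e.1 : G))⁻¹) (fun e => ((e.2.2.1 : ↥P) : G))
        ([] : List (↥P × (H →L[ℂ] H) × ↥P × (H →L[ℂ] H))) * (r : G), h1⟩ : ↥P) = r :=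
      Subtype.ext (show genProd ε ε' (fun e => ((e.1 : G))⁻¹) (fun e => ((e.2.2.1 : ↥P) : G))
        ([] : List (↥P × (H →L[ℂ] H) × ↥P × (H →L[ℂ] H))) * (r : G) = (r : G) by
          rw [genProd_nil, one_mul])
    rw [h2, genProd_nil, genProd_nil, one_mul, one_mul]
  | append_singleton E' a ih =>
    obtain ⟨p, ξp, q, ξq⟩ := a
    have hpq := hE (p, ξp, q, ξq) (List.mem_append_right _ (List.mem_singleton_self _))
    have hp : ξp ∈ X p := hpq.1
    have hq : ξq ∈ X q := hpq.2
    have hE' : ∀ e ∈ E', e.2.1 ∈ X e.1 ∧ e.2.2.2 ∈ X e.2.2.1 :=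
      fun e he => hE e (List.mem_append_left _ he)
    simp only [List.map_append, List.map_cons, List.map_nil] at hr
    set s : ↥P := if ε' = true then q * r else r with hs_def
    set ξs : H →L[ℂ] H := if ε' = true then ξq * ξr else ξr with hξs_def
    have hξs : ξs ∈ X s := by
      cases ε'
      · simpa [hs_def, hξs_def] using hξr
      · simpa [hs_def, hξs_def] using hXmul q r ξq ξr hq hξr
    have hts : (if ε' = false then (1 : K →L[ℂ] K) else t q ξq) * t r ξr = t s ξs := by
      cases ε'
      · simp [hs_def, hξs_def]
      · simp only [hs_def, hξs_def, if_neg (by simp : ¬(true = false)), if_pos rfl]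
        exact htmul q r ξq ξr hq hξr
    have hsval : ((s : ↥P) : G) = (if ε' = false then 1 else (q : G)) * (r : G) := by
      cases ε' <;> simp [hs_def]
    have hξsval : (if ε' = false then (1 : H →L[ℂ] H) else ξq) * ξr = ξs := by
      cases ε' <;> simp [hξs_def]
    by_cases hC : E'.length = 0 ∧ ε = false
    · -- no star factor at all: direct
      obtain ⟨hlen, hεf⟩ := hC
      have hE0 : E' = [] := List.length_eq_zero_iff.mp hlen
      subst hE0
      subst hεf
      have hgv : genProd false ε' (fun e => ((e.1 : G))⁻¹) (fun e => ((e.2.2.1 : ↥P) : G))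
          ([] ++ [(p, ξp, q, ξq)]) * (r : G) = (s : G) := by
        rw [genProd_append, genProd_nil, if_pos ⟨rfl, rfl⟩, hsval, one_mul, one_mul]
      refine ⟨by rw [hgv]; exact s.2, ?_⟩
      have h2 : (⟨genProd false ε' (fun e => ((e.1 : G))⁻¹) (fun e => ((e.2.2.1 : ↥P) : G))
          ([] ++ [(p, ξp, q, ξq)]) * (r : G), by rw [hgv]; exact s.2⟩ : ↥P) = s :=
        Subtype.ext hgv
      rw [h2, genProd_append, genProd_append, genProd_nil, genProd_nil,
        if_pos (⟨rfl, rfl⟩ : (List.length ([] : List (↥P × (H →L[ℂ] H) × ↥P × (H →L[ℂ] H))) = 0)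
          ∧ false = false),
        if_pos (⟨rfl, rfl⟩ : (List.length ([] : List (↥P × (H →L[ℂ] H) × ↥P × (H →L[ℂ] H))) = 0)
          ∧ false = false), one_mul, one_mul, one_mul, one_mul, hξsval, hts]
    · -- there is a star factor for the last pair
      have hu : ∃ u : ↥P, u ∈ psWord ε true (E'.map fun e => (e.1, e.2.2.1)) Set.univ ∧
          p * u = s := by
        by_cases hE0 : E' = []
        · have hε : ε = true := by
            cases ε
            · exact absurd ⟨by rw [hE0]; rfl, rfl⟩ hC
            · rfl
          have hr' := hr
          rw [hE0, List.map_nil, List.nil_append, hε, psWord_singleton] at hr'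
          have hsmem : s ∈ (fun x => (p : ↥P) * x) '' (Set.univ : Set ↥P) := by
            cases ε' <;> simpa [hs_def] using hr'
          obtain ⟨u, -, huv⟩ := hsmem
          refine ⟨u, ?_, huv⟩
          rw [hE0]
          exact Set.mem_univ u
        · rw [psWord_append ε ε' _ (by simpa using hE0)] at hr
          have hsmem : s ∈ (fun x => (p : ↥P) * x) ''
              psWord ε true (E'.map fun e => (e.1, e.2.2.1)) Set.univ := by
            cases ε' <;> simpa [hs_def] using hr
          obtain ⟨u, hu1, hu2⟩ := hsmem
          exact ⟨u, hu1, hu2⟩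
      obtain ⟨u, huW, hpu⟩ := hu
      have hξs' : ξs ∈ X (p * u) := by rw [hpu]; exact hξs
      have hξu : star ξp * ξs ∈ X u := hXstar p u ξp ξs hp hξs'
      have hop : star (t p ξp) * t s ξs = t u (star ξp * ξs) := by
        rw [← hpu]
        exact htstar p u ξp ξs hp hξs'
      obtain ⟨h', heq⟩ := ih true hE' u (star ξp * ξs) hξu huW
      have huval : ((p : G))⁻¹ * ((if ε' = false then 1 else (q : G)) * (r : G)) = (u : G) := by
        rw [← hsval, ← hpu]
        push_cast
        group
      have hgv : genProd ε ε' (fun e => ((e.1 : G))⁻¹) (fun e => ((e.2.2.1 : ↥P) : G))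
          (E' ++ [(p, ξp, q, ξq)]) * (r : G)
          = genProd ε true (fun e => ((e.1 : G))⁻¹) (fun e => ((e.2.2.1 : ↥P) : G)) E'
            * (u : G) := by
        rw [genProd_append, if_neg hC, mul_assoc, mul_assoc, huval]
      refine ⟨by rw [hgv]; exact h', ?_⟩
      have h2 : (⟨genProd ε ε' (fun e => ((e.1 : G))⁻¹) (fun e => ((e.2.2.1 : ↥P) : G))
          (E' ++ [(p, ξp, q, ξq)]) * (r : G), by rw [hgv]; exact h'⟩ : ↥P)
          = ⟨genProd ε true (fun e => ((e.1 : G))⁻¹) (fun e => ((e.2.2.1 : ↥P) : G)) E'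
              * (u : G), h'⟩ :=
        Subtype.ext hgv
      rw [h2]
      calc genProd ε ε' (fun e => star (t e.1 e.2.1)) (fun e => t e.2.2.1 e.2.2.2)
              (E' ++ [(p, ξp, q, ξq)]) * t r ξr
          = genProd ε true (fun e => star (t e.1 e.2.1)) (fun e => t e.2.2.1 e.2.2.2) E'
            * (star (t p ξp) * ((if ε' = false then 1 else t q ξq) * t r ξr)) := by
            rw [genProd_append, if_neg hC, mul_assoc, mul_assoc]
        _ = genProd ε true (fun e => star (t e.1 e.2.1)) (fun e => t e.2.2.1 e.2.2.2) E'
            * t u (star ξp * ξs) := by rw [hts, hop]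
        _ = t ⟨genProd ε true (fun e => ((e.1 : G))⁻¹) (fun e => ((e.2.2.1 : ↥P) : G)) E'
              * (u : G), h'⟩
            (genProd ε true (fun e => star e.2.1) (fun e => e.2.2.2) E' * (star ξp * ξs)) :=
            heq
        _ = t ⟨genProd ε true (fun e => ((e.1 : G))⁻¹) (fun e => ((e.2.2.1 : ↥P) : G)) E'
              * (u : G), h'⟩
            (genProd ε ε' (fun e => star e.2.1) (fun e => e.2.2.2)
              (E' ++ [(p, ξp, q, ξq)]) * ξr) := by
            rw [genProd_append, if_neg hC, mul_assoc, mul_assoc, hξsval]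
end
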